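/- arXiv:2505.21133 — 3 statements merged into one kernel-verified Lean document; each statement's English description precedes it below -/
import Mathlib

section
/- For an arbitrary matrix S ∈ ℝ^{m×n} with SS^T invertible and a positive definite matrix B ∈ ℝ^{n×n}, the inverse of S B S^T satisfies (S B S^T)^{-1} = S^{+T} B^{-1/2} G B^{-1/2} S^{+}, where G = I - B^{-1/2}(I - S^{+}S)(B^{-1/2}(I - S^{+}S))^{+} and ^{+} denotes the Moore–Penrose pseudoinverse. -/
open Matrix

/-- A matrix `Ap` is the Moore–Penrose pseudoinverse of `A` iff it satisfies the four
Penrose conditions (over ℝ, conjugate-transpose is transpose). -/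
def IsMoorePenrose {m n : Type*} [Fintype m] [Fintype n]
    (A : Matrix m n ℝ) (Ap : Matrix n m ℝ) : Prop :=
  A * Ap * A = A ∧ Ap * A * Ap = Ap ∧ (A * Ap)ᵀ = A * Ap ∧ (Ap * A)ᵀ = Ap * A

/-- For `S ∈ ℝ^{m×n}` with `S Sᵀ` invertible and `B ∈ ℝ^{n×n}` symmetric positive
definite, `(S B Sᵀ)⁻¹ = S⁺ᵀ B^{-1/2} G B^{-1/2} S⁺`, where
`G = I - B^{-1/2} (I - S⁺ S) (B^{-1/2} (I - S⁺ S))⁺`, `B^{-1/2}` is the positive definite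
square root of `B⁻¹`, and `⁺` denotes the Moore–Penrose pseudoinverse. -/
theorem inv_sandwich_pinv {m n : Type*} [Fintype m] [Fintype n] [DecidableEq m]
    [DecidableEq n]
    (S : Matrix m n ℝ) (hSST : IsUnit (S * Sᵀ).det)
    (B : Matrix n n ℝ) (hB : B.PosDef)
    (Sp : Matrix n m ℝ) (hSp : IsMoorePenrose S Sp)
    (Bih : Matrix n n ℝ) (hBih : Bih.PosDef) (hBihSq : Bih * Bih = B⁻¹)
    (Q : Matrix n n ℝ) (hQ : Q = Bih * (1 - Sp * S))
    (Qp : Matrix n n ℝ) (hQp : IsMoorePenrose Q Qp)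
    (G : Matrix n n ℝ) (hG : G = 1 - Q * Qp) :
    (S * B * Sᵀ)⁻¹ = Spᵀ * Bih * G * Bih * Sp := by
  obtain ⟨hS1, hS2, hS3, hS4⟩ := hSp
  obtain ⟨hQ1, hQ2, hQ3, hQ4⟩ := hQp
  have hBihT : Bihᵀ = Bih := by
    have := hBih.isHermitian
    simpa [Matrix.IsHermitian] using this
  have hGT : Gᵀ = G := by
    rw [hG, Matrix.transpose_sub, Matrix.transpose_one, hQ3]
  have hSSp : S * Sp = 1 := by
    have h : S * Sp * (S * Sᵀ) = S * Sᵀ := by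
      rw [← Matrix.mul_assoc, hS1]
    calc S * Sp = S * Sp * ((S * Sᵀ) * (S * Sᵀ)⁻¹) := by
          rw [Matrix.mul_nonsing_inv _ hSST, Matrix.mul_one]
      _ = (S * Sp * (S * Sᵀ)) * (S * Sᵀ)⁻¹ := by simp only [Matrix.mul_assoc]
      _ = (S * Sᵀ) * (S * Sᵀ)⁻¹ := by rw [h]
      _ = 1 := Matrix.mul_nonsing_inv _ hSST
  have hq0 : G * Q = 0 := by
    rw [hG, Matrix.sub_mul, Matrix.one_mul, hQ1, sub_self]
  have ht : (1 - Sp * S) * Bih * G = 0 := by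
    have h := congrArg Matrix.transpose hq0
    rw [Matrix.transpose_mul, Matrix.transpose_zero, hGT, hQ, Matrix.transpose_mul,
      Matrix.transpose_sub, Matrix.transpose_one, hS4, hBihT] at h
    exact h
  have h2 : Sp * S * (Bih * G) = Bih * G := by
    have h0 : Bih * G - Sp * S * (Bih * G) = 0 := by
      rw [← ht]
      simp only [Matrix.sub_mul, Matrix.one_mul, Matrix.mul_assoc]
    exact (sub_eq_zero.mp h0).symm
  have hBinv : B * (Bih * Bih) = 1 := by
    rw [hBihSq]
    exact Matrix.mul_nonsing_inv _ (isUnit_iff_ne_zero.mpr hB.det_pos.ne')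
  have hS0 : S * (1 - Sp * S) = 0 := by
    rw [Matrix.mul_sub, Matrix.mul_one, ← Matrix.mul_assoc, hS1, sub_self]
  have key : (S * B * Sᵀ) * (Spᵀ * Bih * G * Bih * Sp) = 1 := by
    calc (S * B * Sᵀ) * (Spᵀ * Bih * G * Bih * Sp)
        = S * B * ((Sᵀ * Spᵀ) * (Bih * G)) * (Bih * Sp) := by
          simp only [Matrix.mul_assoc]
      _ = S * B * ((Sp * S) * (Bih * G)) * (Bih * Sp) := by
          rw [← Matrix.transpose_mul, hS4]
      _ = S * B * (Bih * G) * (Bih * Sp) := by rw [h2]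
      _ = S * (B * (Bih * Bih)) * Sp
          - S * (B * (Bih * Bih)) * ((1 - Sp * S) * (Qp * (Bih * Sp))) := by
          rw [hG, hQ]
          simp only [Matrix.mul_sub, Matrix.sub_mul, Matrix.mul_one, Matrix.one_mul,
            Matrix.mul_assoc]
      _ = S * Sp - S * ((1 - Sp * S) * (Qp * (Bih * Sp))) := by
          rw [hBinv]; simp only [Matrix.mul_one]
      _ = 1 := by
          rw [hSSp, ← Matrix.mul_assoc, hS0, Matrix.zero_mul, sub_zero]
  exact Matrix.inv_eq_right_inv key
end

section
/- Let K̃ be a symmetric positive definite n×n matrix and S ∈ ℝ^{n×i} have full column rank, and let C̃ = S (S^T K̃ S)^{-1} S^T. Then K̃^{-1} - C̃ is positive semidefinite. -/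
/-!
`Sᴴ K S` is positive definite because `S` is injective, and it is the lower-right block of the
Gram matrix `[K⁻¹, S]ᴴ K [K⁻¹, S] = !![K⁻¹, S; Sᴴ, Sᴴ K S]`, which is positive semidefinite.
The claimed matrix `K⁻¹ - S (Sᴴ K S)⁻¹ Sᴴ` is the Schur complement of that block.
-/

open Matrix
open scoped ComplexOrder

namespace Matrix

variable {m n 𝕜 : Type*} [Fintype n]

theorem mulVec_injective_of_rank_eq_card {K : Type*} [Field K] {A : Matrix m n K}
    (hA : A.rank = Fintype.card n) : Function.Injective A.mulVec := by
  rw [mulVec_injective_iff, linearIndependent_iff_card_eq_finrank_span, ← hA,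
    rank_eq_finrank_span_cols]
  rfl

variable [Fintype m] [DecidableEq m] [RCLike 𝕜]

theorem PosDef.posSemidef_fromBlocks_inv_conjTranspose_mul_mul {K : Matrix m m 𝕜}
    (hK : K.PosDef) (S : Matrix m n 𝕜) :
    (fromBlocks K⁻¹ S Sᴴ (Sᴴ * K * S)).PosSemidef := by
  have : Invertible K := hK.isUnit.invertible
  convert hK.posSemidef.conjTranspose_mul_mul_same (fromCols K⁻¹ S) using 1
  rw [conjTranspose_fromCols_eq_fromRows_conjTranspose, fromRows_mul, fromRows_mul_fromCols,
    hK.1.inv.eq]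
  simp

theorem PosDef.posSemidef_inv_sub_mul_inv_conjTranspose_mul_mul [DecidableEq n]
    {K : Matrix m m 𝕜} (hK : K.PosDef) {S : Matrix m n 𝕜} (hS : Function.Injective S.mulVec) :
    (K⁻¹ - S * (Sᴴ * K * S)⁻¹ * Sᴴ).PosSemidef := by
  have hG := hK.conjTranspose_mul_mul_same hS
  have : Invertible (Sᴴ * K * S) := hG.isUnit.invertible
  exact (fromBlocks₂₂ _ _ hG).mp (hK.posSemidef_fromBlocks_inv_conjTranspose_mul_mul S)

end Matrix

/-- Let `K̃` be symmetric positive definite `n×n` and `S` an `n×i` matrix of full column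
rank, and `C̃ = S (Sᵀ K̃ S)⁻¹ Sᵀ`. Then `K̃⁻¹ - C̃` is positive semidefinite. -/
theorem inv_sub_lowrank_posSemidef {n i : Type*} [Fintype n] [DecidableEq n]
    [Fintype i] [DecidableEq i]
    (Kt : Matrix n n ℝ) (hKt : Kt.PosDef)
    (S : Matrix n i ℝ) (hS : S.rank = Fintype.card i)
    (C : Matrix n n ℝ) (hC : C = S * (Sᵀ * Kt * S)⁻¹ * Sᵀ) :
    (Kt⁻¹ - C).PosSemidef := by
  subst hC
  exact hKt.posSemidef_inv_sub_mul_inv_conjTranspose_mul_mul (mulVec_injective_of_rank_eq_card hS)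
end

section
/- Worst-case error equals computational uncertainty: let K̃ be a symmetric positive definite n×n Gram-type matrix and C̃ = S(S^T K̃ S)^{-1}S^T for full column rank S. For a fixed vector a ∈ ℝ^n, the supremum over all h ∈ ℝ^n of the form h = K̃ β with β^T K̃ β ≤ 1 (equivalently, h^T K̃^{-1} h ≤ 1) of (a^T K̃^{-1} h - a^T C̃ h)² equals a^T (K̃^{-1} - C̃) K̃ (K̃^{-1} - C̃) a = a^T (K̃^{-1} - C̃) a. -/
open Matrix

-- Cauchy-Schwarz for dot product over ℝ
lemma dotProduct_sq_le {n : Type*} [Fintype n] (u v : n → ℝ) :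
    (u ⬝ᵥ v) ^ 2 ≤ (u ⬝ᵥ u) * (v ⬝ᵥ v) := by
  simpa only [dotProduct, ← pow_two] using
    Finset.sum_mul_sq_le_sq_mul_sq Finset.univ u v

/-- Worst-case error equals computational uncertainty: with `K̃` symmetric positive
definite, `S` of full column rank, `C̃ = S (Sᵀ K̃ S)⁻¹ Sᵀ`, and fixed `a`, the supremum of
`(aᵀ K̃⁻¹ h - aᵀ C̃ h)²` over `h = K̃ β` with `βᵀ K̃ β ≤ 1` is attained and equals
`aᵀ (K̃⁻¹ - C̃) K̃ (K̃⁻¹ - C̃) a = aᵀ (K̃⁻¹ - C̃) a`. -/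
theorem worst_case_error_eq_uncertainty {n i : Type*} [Fintype n] [DecidableEq n]
    [Fintype i] [DecidableEq i]
    (Kt : Matrix n n ℝ) (hKt : Kt.PosDef)
    (S : Matrix n i ℝ) (hS : S.rank = Fintype.card i)
    (C : Matrix n n ℝ) (hC : C = S * (Sᵀ * Kt * S)⁻¹ * Sᵀ)
    (a : n → ℝ) :
    IsGreatest
      {r : ℝ | ∃ β : n → ℝ, β ⬝ᵥ (Kt *ᵥ β) ≤ 1 ∧
        r = (a ⬝ᵥ (Kt⁻¹ *ᵥ (Kt *ᵥ β)) - a ⬝ᵥ (C *ᵥ (Kt *ᵥ β))) ^ 2}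
      (a ⬝ᵥ ((Kt⁻¹ - C) *ᵥ a)) ∧
    (Kt⁻¹ - C) * Kt * (Kt⁻¹ - C) = Kt⁻¹ - C := by
  -- S has trivial kernel
  have hker : LinearMap.ker S.mulVecLin = ⊥ := by
    have h1 := LinearMap.finrank_range_add_finrank_ker S.mulVecLin
    rw [Module.finrank_pi] at h1
    have : Module.finrank ℝ (LinearMap.ker S.mulVecLin) = 0 := by
      have : S.rank = Module.finrank ℝ (LinearMap.range S.mulVecLin) := rfl
      omega
    exact Submodule.finrank_eq_zero.mp this
  have hSinj : ∀ x : i → ℝ, x ≠ 0 → S *ᵥ x ≠ 0 := by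
    intro x hx h
    exact hx (by simpa [LinearMap.ker_eq_bot'] using
      (LinearMap.ker_eq_bot.mp hker) (a₂ := 0) (by simpa using h))
  have hKtsymm : Ktᵀ = Kt := hKt.isHermitian
  -- B := Sᵀ Kt S is posdef
  set B := Sᵀ * Kt * S with hB
  have hBpd : B.PosDef := by
    refine Matrix.PosDef.of_dotProduct_mulVec_pos ?_ ?_
    · show Bᴴ = B
      rw [hB]
      simp [Matrix.conjTranspose_mul, Matrix.mul_assoc, hKtsymm,
        show Ktᴴ = Kt from hKt.isHermitian]
    · intro x hx
      have : star x ⬝ᵥ (B *ᵥ x) = (S *ᵥ x) ⬝ᵥ (Kt *ᵥ (S *ᵥ x)) := by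
        rw [hB, ← Matrix.mulVec_mulVec, ← Matrix.mulVec_mulVec,
          Matrix.dotProduct_mulVec, Matrix.vecMul_transpose]
        simp
      rw [this]
      have := hKt.dotProduct_mulVec_pos (hSinj x hx)
      simpa using this
  have hBunit : IsUnit B.det := hBpd.det_pos.ne'.isUnit
  have hKunit : IsUnit Kt.det := hKt.det_pos.ne'.isUnit
  have hBinv : B⁻¹ * B = 1 := Matrix.nonsing_inv_mul B hBunit
  have hKinvK : Kt⁻¹ * Kt = 1 := Matrix.nonsing_inv_mul Kt hKunit
  have hKKinv : Kt * Kt⁻¹ = 1 := Matrix.mul_nonsing_inv Kt hKunit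
  -- C Kt C = C
  have hCKC : C * Kt * C = C := by
    rw [hC]
    calc S * B⁻¹ * Sᵀ * Kt * (S * B⁻¹ * Sᵀ)
        = S * (B⁻¹ * (Sᵀ * Kt * S) * B⁻¹) * Sᵀ := by
          simp only [Matrix.mul_assoc]
      _ = S * B⁻¹ * Sᵀ := by rw [← hB, hBinv]; simp [Matrix.mul_assoc]
  -- C symmetric
  have hBsymm : Bᵀ = B := hBpd.isHermitian
  have hBinvsymm : (B⁻¹)ᵀ = B⁻¹ := by
    rw [Matrix.transpose_nonsing_inv, hBsymm]
  have hCsymm : Cᵀ = C := by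
    rw [hC]
    simp [Matrix.transpose_mul, hBinvsymm, Matrix.mul_assoc]
  have hKinvsymm : (Kt⁻¹)ᵀ = Kt⁻¹ := by
    rw [Matrix.transpose_nonsing_inv, hKtsymm]
  set M := Kt⁻¹ - C with hM
  have hMsymm : Mᵀ = M := by rw [hM, Matrix.transpose_sub, hKinvsymm, hCsymm]
  have hKC : Kt⁻¹ * Kt * C = C := by rw [hKinvK, Matrix.one_mul]
  have hCK : C * Kt * Kt⁻¹ = C := by rw [Matrix.mul_assoc, hKKinv, Matrix.mul_one]
  have key : M * Kt * M = M := by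
    rw [hM]
    simp only [Matrix.sub_mul, Matrix.mul_sub, hKinvK, hCKC, hCK, Matrix.one_mul]
    abel
  refine ⟨?_, key⟩
  -- value simplification
  have hval : ∀ β : n → ℝ,
      a ⬝ᵥ (Kt⁻¹ *ᵥ (Kt *ᵥ β)) - a ⬝ᵥ (C *ᵥ (Kt *ᵥ β))
        = (M *ᵥ a) ⬝ᵥ (Kt *ᵥ β) := by
    intro β
    have : a ⬝ᵥ (Kt⁻¹ *ᵥ (Kt *ᵥ β)) - a ⬝ᵥ (C *ᵥ (Kt *ᵥ β))
        = a ⬝ᵥ (M *ᵥ (Kt *ᵥ β)) := by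
      rw [hM, Matrix.sub_mulVec, dotProduct_sub]
    rw [this, Matrix.dotProduct_mulVec a M, ← Matrix.mulVec_transpose, hMsymm]
  -- target = (Ma) ⬝ Kt (Ma)
  have htar : a ⬝ᵥ (M *ᵥ a) = (M *ᵥ a) ⬝ᵥ (Kt *ᵥ (M *ᵥ a)) := by
    conv_lhs => rw [← key]
    rw [← Matrix.mulVec_mulVec, ← Matrix.mulVec_mulVec,
      Matrix.dotProduct_mulVec a M, ← Matrix.mulVec_transpose, hMsymm]
  set c := (M *ᵥ a) ⬝ᵥ (Kt *ᵥ (M *ᵥ a)) with hc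
  have hc0 : 0 ≤ c := by
    by_cases h : M *ᵥ a = 0
    · simp [hc, h]
    · exact le_of_lt (by simpa only [star_trivial] using hKt.dotProduct_mulVec_pos h)
  -- Cauchy-Schwarz in Kt inner product
  have hCS : ∀ x y : n → ℝ, (x ⬝ᵥ (Kt *ᵥ y)) ^ 2 ≤ (x ⬝ᵥ (Kt *ᵥ x)) * (y ⬝ᵥ (Kt *ᵥ y)) := by
    obtain ⟨R, hR⟩ : ∃ R : Matrix n n ℝ, Kt = Rᵀ * R := by
      open scoped MatrixOrder in
      obtain ⟨R, hR⟩ := CStarAlgebra.nonneg_iff_eq_star_mul_self.mp hKt.posSemidef.nonneg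
      exact ⟨R, by rw [hR, Matrix.star_eq_conjTranspose, Matrix.conjTranspose_eq_transpose_of_trivial]⟩
    intro x y
    have hxy : ∀ u v : n → ℝ, u ⬝ᵥ (Kt *ᵥ v) = (R *ᵥ u) ⬝ᵥ (R *ᵥ v) := by
      intro u v
      rw [hR, ← Matrix.mulVec_mulVec, Matrix.dotProduct_mulVec u,
        ← Matrix.mulVec_transpose]
      congr 1
    rw [hxy x y, hxy x x, hxy y y]
    exact dotProduct_sq_le _ _
  constructor
  · -- membership
    by_cases h : M *ᵥ a = 0
    · refine ⟨0, by simp, ?_⟩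
      rw [htar, hc, h]
      simp
    · have hcpos : 0 < c := by
        simpa only [star_trivial] using hKt.dotProduct_mulVec_pos h
      refine ⟨(Real.sqrt c)⁻¹ • (M *ᵥ a), ?_, ?_⟩
      · have heq : ((Real.sqrt c)⁻¹ • (M *ᵥ a)) ⬝ᵥ
            (Kt *ᵥ ((Real.sqrt c)⁻¹ • (M *ᵥ a))) = 1 := by
          rw [Matrix.mulVec_smul, dotProduct_smul, smul_dotProduct,
            smul_eq_mul, smul_eq_mul, ← hc, ← Real.mul_self_sqrt hcpos.le]
          have hs : Real.sqrt c ≠ 0 := by positivity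
          field_simp
          rw [Real.sqrt_sq (Real.sqrt_nonneg c)]
        exact le_of_eq heq
      · rw [hval, htar, Matrix.mulVec_smul, dotProduct_smul, smul_eq_mul, ← hc,
          mul_pow, inv_pow, Real.sq_sqrt hcpos.le, sq, ← mul_assoc,
          inv_mul_cancel₀ hcpos.ne', one_mul]
  · -- upper bound
    rintro r ⟨β, hβ, rfl⟩
    rw [hval, htar]
    calc ((M *ᵥ a) ⬝ᵥ (Kt *ᵥ β)) ^ 2
        ≤ ((M *ᵥ a) ⬝ᵥ (Kt *ᵥ (M *ᵥ a))) * (β ⬝ᵥ (Kt *ᵥ β)) := hCS _ _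
      _ ≤ c * 1 := by
          apply mul_le_mul_of_nonneg_left hβ hc0
      _ = c := mul_one c
end
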